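/- Let T be a finite set of frequencies and S ⊆ T, let X, X̃ : T → ℂ, let λ ∈ (0,1] be real, let P be arbitrary real phases, and define X⁺(k) = (λ·‖X(k)‖ + (1−λ)·‖X̃(k)‖)·exp(i·P(k)). Suppose the augmented sample is power-normalized, i.e. ∑_{k ∈ T} ‖X⁺(k)‖² = ∑_{k ∈ T} ‖X(k)‖², and this total power is positive. Then the fraction of power in the band S satisfies (∑_{k ∈ S} ‖X⁺(k)‖²) / (∑_{k ∈ T} ‖X⁺(k)‖²) ≥ λ² · (∑_{k ∈ S} ‖X(k)‖²) / (∑_{k ∈ T} ‖X(k)‖²). -/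
import Mathlib


/-- Ratio form of Theorem 1 (Guarantees for Mixing): under power normalization of the
augmented sample, the fraction of spectral power in the task-relevant band `S` is at
least `λ²` times that of the anchor. -/
theorem amp_phase_mixup_power_fraction {ι : Type*} (T : Finset ι) (S : Finset ι) (hST : S ⊆ T)
    (X Xtilde : ι → ℂ) (lam : ℝ) (hlam : lam ∈ Set.Ioc (0 : ℝ) 1) (P : ι → ℝ)
    (Xplus : ι → ℂ)
    (hXplus : ∀ k, Xplus k =
      (((lam * ‖X k‖ + (1 - lam) * ‖Xtilde k‖ : ℝ)) : ℂ) * Complex.exp ((P k : ℂ) * Complex.I))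
    (hnorm : ∑ k ∈ T, ‖Xplus k‖ ^ 2 = ∑ k ∈ T, ‖X k‖ ^ 2)
    (hpos : 0 < ∑ k ∈ T, ‖X k‖ ^ 2) :
    lam ^ 2 * ((∑ k ∈ S, ‖X k‖ ^ 2) / (∑ k ∈ T, ‖X k‖ ^ 2)) ≤
      (∑ k ∈ S, ‖Xplus k‖ ^ 2) / (∑ k ∈ T, ‖Xplus k‖ ^ 2) := by
  obtain ⟨hl0, hl1⟩ := hlam
  have hptwise : ∀ k, lam ^ 2 * ‖X k‖ ^ 2 ≤ ‖Xplus k‖ ^ 2 := by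
    intro k
    have hnx : ‖Xplus k‖ = lam * ‖X k‖ + (1 - lam) * ‖Xtilde k‖ := by
      rw [hXplus k, norm_mul, Complex.norm_exp_ofReal_mul_I, mul_one,
        Complex.norm_real, Real.norm_eq_abs, abs_of_nonneg]
      nlinarith [norm_nonneg (X k), norm_nonneg (Xtilde k)]
    rw [hnx]
    have h1 : lam * ‖X k‖ ≤ lam * ‖X k‖ + (1 - lam) * ‖Xtilde k‖ := by
      nlinarith [norm_nonneg (Xtilde k)]
    calc lam ^ 2 * ‖X k‖ ^ 2 = (lam * ‖X k‖) ^ 2 := by ring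
    _ ≤ _ := by
        apply pow_le_pow_left₀ (by positivity) h1
  have hsum : lam ^ 2 * ∑ k ∈ S, ‖X k‖ ^ 2 ≤ ∑ k ∈ S, ‖Xplus k‖ ^ 2 := by
    rw [Finset.mul_sum]
    exact Finset.sum_le_sum fun k _ => hptwise k
  rw [hnorm, mul_div_assoc']
  gcongr
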